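/- arXiv:1711.05841 — 3 statements merged into one kernel-verified Lean document; each statement's English description precedes it below -/
import Mathlib

section
/- Let p : [-1,1] → ℝ be continuous. If for all s, t ∈ [-1,1] we have p(s) + p(t) ≥ p((s-t)/2) + p((t-s)/2), then p is even and convex. -/
/-!
Write `O a = p a - p (-a)` and `E a = p a + p (-a)`. The hypothesis at `(a, -b)` and at `(b, -a)`
gives `|O a - O b| ≤ E a + E b - 2 E ((a + b) / 2)`. Summed over the grid `0, x/N, …, x`, both
sides telescope, leaving `|O x + O (x - x/N) - O (x/N) - O 0| ≤ E x - E (x - x/N) - E (x/N) + E 0`;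
letting `N → ∞` gives `|2 O x| ≤ 0`, so `p` is even. Evenness turns the hypothesis at `(a, -b)`
into midpoint convexity, and a continuous midpoint convex function is convex: on a segment, a
leftmost minimiser of a midpoint concave function cannot be interior.
-/

open Set Filter Topology

theorem nonneg_of_midpoint_concave {g : ℝ → ℝ} {a b : ℝ} (hg : ContinuousOn g (Icc a b))
    (hmid : ∀ s ∈ Icc a b, ∀ t ∈ Icc a b, (g s + g t) / 2 ≤ g ((s + t) / 2))
    (ha : 0 ≤ g a) (hb : 0 ≤ g b) : ∀ t ∈ Icc a b, 0 ≤ g t := by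
  by_contra! ⟨t, ht, hgt⟩
  obtain ⟨t₀, ht₀, hmin⟩ := isCompact_Icc.exists_isMinOn ⟨t, ht⟩ hg
  rw [isMinOn_iff] at hmin
  have hS : IsCompact (Icc a b ∩ g ⁻¹' {g t₀}) :=
    isCompact_Icc.of_isClosed_subset
      (hg.preimage_isClosed_of_isClosed isClosed_Icc isClosed_singleton) inter_subset_left
  obtain ⟨t₁, ⟨ht₁, hgt₁ : g t₁ = g t₀⟩, hleast⟩ := hS.exists_isLeast ⟨t₀, ht₀, rfl⟩
  have hneg : g t₁ < 0 := by linarith [hmin t ht]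
  have ha₁ : a < t₁ := ht₁.1.lt_of_ne (by rintro rfl; linarith)
  have hb₁ : t₁ < b := ht₁.2.lt_of_ne (by rintro rfl; linarith)
  set δ := min (t₁ - a) (b - t₁)
  have hδ : 0 < δ := lt_min (by linarith) (by linarith)
  have hl : t₁ - δ ∈ Icc a b := ⟨by linarith [min_le_left (t₁ - a) (b - t₁)], by linarith⟩
  have hr : t₁ + δ ∈ Icc a b := ⟨by linarith, by linarith [min_le_right (t₁ - a) (b - t₁)]⟩
  have hm := hmid _ hl _ hr
  rw [show (t₁ - δ + (t₁ + δ)) / 2 = t₁ by ring] at hm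
  have hgl : g (t₁ - δ) = g t₀ := by linarith [hmin _ hl, hmin _ hr]
  linarith [hleast ⟨hl, hgl⟩]

theorem ConvexOn.of_midpoint {E : Type*} [AddCommGroup E] [Module ℝ E] [TopologicalSpace E]
    [ContinuousAdd E] [ContinuousSMul ℝ E] {s : Set E} {f : E → ℝ} (hs : Convex ℝ s)
    (hf : ContinuousOn f s) (hmid : ∀ x ∈ s, ∀ y ∈ s, f (midpoint ℝ x y) ≤ (f x + f y) / 2) :
    ConvexOn ℝ s f := by
  refine ⟨hs, fun x hx y hy a b ha hb hab => ?_⟩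
  obtain rfl : a = 1 - b := by linarith
  set L : ℝ → E := fun t => (1 - t) • x + t • y
  have hL : MapsTo L (Icc 0 1) s := fun t ht => hs hx hy (by linarith [ht.2]) ht.1 (by ring)
  have hLmid (s t : ℝ) : midpoint ℝ (L s) (L t) = L ((s + t) / 2) := by
    simp only [L, midpoint_eq_smul_add, invOf_eq_inv]
    module
  have key := nonneg_of_midpoint_concave (g := fun t => (1 - t) * f x + t * f y - f (L t))
    (ContinuousOn.sub (by fun_prop) (hf.comp (by fun_prop) hL))
    (fun s hs t ht => by
      have := hmid _ (hL hs) _ (hL ht)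
      rw [hLmid] at this
      linarith)
    (by simp [L]) (by simp [L]) b ⟨hb, by linarith⟩
  simp only [smul_eq_mul] at key ⊢
  linarith

theorem abs_telescope_le_of_abs_sub_le_secondDiff {g f : ℕ → ℝ} {n : ℕ}
    (h : ∀ i < n, |g (i + 2) - g i| ≤ f (i + 2) - 2 * f (i + 1) + f i) :
    |g (n + 1) + g n - g 1 - g 0| ≤ f (n + 1) - f n - f 1 + f 0 := by
  induction n with
  | zero => simp
  | succ n ih =>
    calc |g (n + 2) + g (n + 1) - g 1 - g 0|
        = |(g (n + 1) + g n - g 1 - g 0) + (g (n + 2) - g n)| := by ring_nf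
      _ ≤ |g (n + 1) + g n - g 1 - g 0| + |g (n + 2) - g n| := abs_add_le _ _
      _ ≤ (f (n + 1) - f n - f 1 + f 0) + (f (n + 2) - 2 * f (n + 1) + f n) :=
        add_le_add (ih fun i hi => h i (hi.trans n.lt_succ_self)) (h n n.lt_succ_self)
      _ = f (n + 2) - f (n + 1) - f 1 + f 0 := by ring

theorem apply_one_eq_apply_zero_of_abs_sub_le_secondDiff {g f : ℝ → ℝ}
    (hg : ContinuousOn g (Icc 0 1)) (hf : ContinuousOn f (Icc 0 1))
    (h : ∀ a ∈ Icc (0 : ℝ) 1, ∀ b ∈ Icc (0 : ℝ) 1, |g a - g b| ≤ f a + f b - 2 * f ((a + b) / 2)) :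
    g 1 = g 0 := by
  set t : ℕ → ℝ := fun n => 1 / ((n : ℝ) + 1)
  have ht_mem (n : ℕ) : t n ∈ Icc (0 : ℝ) 1 :=
    ⟨by positivity, div_le_one_of_le₀ (by linarith [n.cast_nonneg (α := ℝ)]) (by positivity)⟩
  have hgrid (n : ℕ) :
      |g 1 + g (1 - t n) - g (t n) - g 0| ≤ f 1 - f (1 - t n) - f (t n) + f 0 := by
    have hmem (i : ℕ) (hi : i ≤ n + 1) : (i : ℝ) * t n ∈ Icc (0 : ℝ) 1 := by
      refine ⟨by positivity, ?_⟩
      rw [← div_eq_mul_one_div, div_le_one (by positivity)]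
      exact_mod_cast hi
    have key := abs_telescope_le_of_abs_sub_le_secondDiff (n := n)
      (g := fun i => g (i * t n)) (f := fun i => f (i * t n)) fun i hi => by
        have := h _ (hmem (i + 2) (by omega)) _ (hmem i (by omega))
        rw [show (((i + 2 : ℕ) : ℝ) * t n + i * t n) / 2 = ((i + 1 : ℕ) : ℝ) * t n by
          push_cast; ring] at this
        linarith
    have h1 : ((n + 1 : ℕ) : ℝ) * t n = 1 := by simp only [t]; push_cast; field_simp
    have h2 : (n : ℝ) * t n = 1 - t n := by simp only [t]; field_simp; ring
    simpa only [h1, h2, Nat.cast_one, Nat.cast_zero, one_mul, zero_mul] using key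
  have ht₀ : Tendsto t atTop (𝓝 0) := tendsto_one_div_add_atTop_nhds_zero_nat
  have ht : Tendsto t atTop (𝓝[Icc 0 1] 0) :=
    tendsto_nhdsWithin_iff.2 ⟨ht₀, .of_forall ht_mem⟩
  have hs : Tendsto (fun n => 1 - t n) atTop (𝓝[Icc 0 1] 1) := by
    refine tendsto_nhdsWithin_iff.2 ⟨?_, .of_forall fun n => ?_⟩
    · simpa using tendsto_const_nhds.sub ht₀
    · exact ⟨by linarith [(ht_mem n).2], by linarith [(ht_mem n).1]⟩
  have h0 : (0 : ℝ) ∈ Icc (0 : ℝ) 1 := left_mem_Icc.2 zero_le_one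
  have h1 : (1 : ℝ) ∈ Icc (0 : ℝ) 1 := right_mem_Icc.2 zero_le_one
  have hlim := le_of_tendsto_of_tendsto'
    (((tendsto_const_nhds.add ((hg 1 h1).tendsto.comp hs)).sub
      ((hg 0 h0).tendsto.comp ht)).sub tendsto_const_nhds).abs
    (((tendsto_const_nhds.sub ((hf 1 h1).tendsto.comp hs)).sub
      ((hf 0 h0).tendsto.comp ht)).add tendsto_const_nhds) hgrid
  rw [sub_self, zero_sub, neg_add_cancel, abs_nonpos_iff] at hlim
  linarith

theorem abs_oddPart_sub_le_secondDiff_evenPart {p : ℝ → ℝ}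
    (h : ∀ s ∈ Icc (-1:ℝ) 1, ∀ t ∈ Icc (-1:ℝ) 1, p s + p t ≥ p ((s - t) / 2) + p ((t - s) / 2))
    {a b : ℝ} (ha : a ∈ Icc (-1 : ℝ) 1) (hb : b ∈ Icc (-1 : ℝ) 1) :
    |(p a - p (-a)) - (p b - p (-b))| ≤
      (p a + p (-a)) + (p b + p (-b)) - 2 * (p ((a + b) / 2) + p (-((a + b) / 2))) := by
  have hab := h a ha (-b) (neg_mem_Icc_iff.2 (by simpa using hb))
  have hba := h b hb (-a) (neg_mem_Icc_iff.2 (by simpa using ha))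
  rw [show (a - -b) / 2 = (a + b) / 2 by ring, show (-b - a) / 2 = -((a + b) / 2) by ring] at hab
  rw [show (b - -a) / 2 = (a + b) / 2 by ring, show (-a - b) / 2 = -((a + b) / 2) by ring] at hba
  rw [abs_le]
  constructor <;> linarith

theorem apply_neg_eq_of_halfDiff_le {p : ℝ → ℝ}
    (h : ∀ s ∈ Icc (-1:ℝ) 1, ∀ t ∈ Icc (-1:ℝ) 1, p s + p t ≥ p ((s - t) / 2) + p ((t - s) / 2))
    (hp : ContinuousOn p (Icc (-1) 1)) {x : ℝ} (hx : x ∈ Icc (-1 : ℝ) 1) :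
    p (-x) = p x := by
  have hseg : MapsTo (· * x) (Icc (0 : ℝ) 1) (Icc (-1) 1) := fun t ht => by
    simpa using (convex_Icc (-1 : ℝ) 1).smul_mem_of_zero_mem (by norm_num) hx ht
  have hseg' : MapsTo (fun t => -(t * x)) (Icc (0 : ℝ) 1) (Icc (-1) 1) :=
    fun t ht => neg_mem_Icc_iff.2 (by simpa using hseg ht)
  have hpos : ContinuousOn (fun t => p (t * x)) (Icc 0 1) := hp.comp (by fun_prop) hseg
  have hneg : ContinuousOn (fun t => p (-(t * x))) (Icc 0 1) := hp.comp (by fun_prop) hseg'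
  have := apply_one_eq_apply_zero_of_abs_sub_le_secondDiff (hpos.sub hneg) (hpos.add hneg)
    fun a ha b hb => by
      have := abs_oddPart_sub_le_secondDiff_evenPart h (hseg ha) (hseg hb)
      rw [show (a * x + b * x) / 2 = (a + b) / 2 * x by ring] at this
      simpa only [Pi.add_apply, Pi.sub_apply] using this
  simp only [Pi.sub_apply, one_mul, zero_mul, neg_zero, sub_self] at this
  linarith

theorem stmt_0 (p : ℝ → ℝ) (hp : ContinuousOn p (Icc (-1) 1))
    (h : ∀ s ∈ Icc (-1:ℝ) 1, ∀ t ∈ Icc (-1:ℝ) 1,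
      p s + p t ≥ p ((s - t) / 2) + p ((t - s) / 2)) :
    (∀ x ∈ Icc (-1:ℝ) 1, p (-x) = p x) ∧ ConvexOn ℝ (Icc (-1) 1) p := by
  have heven : ∀ x ∈ Icc (-1 : ℝ) 1, p (-x) = p x :=
    fun x hx => apply_neg_eq_of_halfDiff_le h hp hx
  refine ⟨heven, ConvexOn.of_midpoint (convex_Icc _ _) hp fun a ha b hb => ?_⟩
  have hm : midpoint ℝ a b = (a + b) / 2 := by
    rw [midpoint_eq_smul_add, invOf_eq_inv, smul_eq_mul]; ring
  have hab := h a ha (-b) (neg_mem_Icc_iff.2 (by simpa using hb))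
  rw [show (a - -b) / 2 = (a + b) / 2 by ring, show (-b - a) / 2 = -((a + b) / 2) by ring,
    heven b hb, heven _ (by rw [← hm]; exact (convex_Icc _ _).midpoint_mem ha hb)] at hab
  rw [hm]
  linarith
end

section
/- Let q ≥ 0, w > 0 and set A(w,q) = [ q(4w - (w+3)ln(w+1)) - ((w-1)/w)ln(w+1) + 4w/ln(w+1) - 4 ] / (2(qw+1)) · q/(q+1). Then for all w > 0 and all q ≥ 0, A(w,q) ≤ 0.63. -/
/-!
Write `L = log (w + 1)`. Clearing denominators, `A w q ≤ 0.63` follows from two inequalities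
in `w` and `L` alone: `(w + 3) L ≥ 2.74 w`, which absorbs the `q²` term, and a quadratic bound
in `L` that handles the terms linear in `q`. Both follow from the Padé [3/3] lower bound
`log (1 + x) ≥ (60x + 60x² + 11x³) / (60 + 90x + 36x² + 3x³)` for `x ≥ 0` (the difference has
derivative `9x⁶ / ((1 + x) Q(x)²) ≥ 0`), together with `log (1 + x) ≤ x` when `x < 1`, after
which only positivity of explicit polynomials is left.
-/

open Real Set

noncomputable def logPade (x : ℝ) : ℝ :=
  (60 * x + 60 * x ^ 2 + 11 * x ^ 3) / (60 + 90 * x + 36 * x ^ 2 + 3 * x ^ 3)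

lemma logPade_denom_pos {x : ℝ} (hx : 0 ≤ x) : 0 < 60 + 90 * x + 36 * x ^ 2 + 3 * x ^ 3 := by
  positivity

lemma hasDerivAt_log_one_add_sub_logPade {x : ℝ} (hx : 0 ≤ x) :
    HasDerivAt (fun y => log (1 + y) - logPade y)
      (9 * x ^ 6 / ((1 + x) * (60 + 90 * x + 36 * x ^ 2 + 3 * x ^ 3) ^ 2)) x := by
  have hQ := (logPade_denom_pos hx).ne'
  have hlog := ((hasDerivAt_id x).const_add 1).log (by simp; linarith)
  have hN := ((hasDerivAt_id x).const_mul 60).add ((hasDerivAt_pow 2 x).const_mul 60)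
    |>.add ((hasDerivAt_pow 3 x).const_mul 11)
  have hD := ((((hasDerivAt_id x).const_mul 90).const_add 60).add
    ((hasDerivAt_pow 2 x).const_mul 36)).add ((hasDerivAt_pow 3 x).const_mul 3)
  refine (hlog.sub (hN.div hD hQ)).congr_deriv ?_
  have : (1 + x : ℝ) ≠ 0 := by positivity
  simp only [Pi.add_apply, id]
  field_simp
  ring

lemma logPade_le_log_one_add {x : ℝ} (hx : 0 ≤ x) : logPade x ≤ log (1 + x) := by
  have hmono : MonotoneOn (fun y => log (1 + y) - logPade y) (Ici 0) := by
    refine monotoneOn_of_hasDerivWithinAt_nonneg (convex_Ici 0)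
      (fun y hy => (hasDerivAt_log_one_add_sub_logPade hy).continuousAt.continuousWithinAt)
      (fun y hy => (hasDerivAt_log_one_add_sub_logPade (interior_subset hy)).hasDerivWithinAt)
      (fun y hy => ?_)
    have hy : 0 ≤ y := interior_subset hy
    positivity
  simpa [logPade, sub_nonneg] using hmono self_mem_Ici (mem_Ici.2 hx) hx

lemma logPade_nonneg {x : ℝ} (hx : 0 ≤ x) : 0 ≤ logPade x := by
  unfold logPade; positivity

lemma mul_le_add_three_mul_log {w : ℝ} (hw : 0 ≤ w) : 2.74 * w ≤ (w + 3) * log (w + 1) := by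
  have hP := logPade_le_log_one_add hw
  rw [add_comm 1 w] at hP
  calc 2.74 * w ≤ (w + 3) * logPade w := by
        unfold logPade
        rw [← mul_div_assoc, le_div_iff₀ (logPade_denom_pos hw)]
        nlinarith [mul_nonneg hw (sq_nonneg (w - 9 / 5)), sq_nonneg (w - 179 / 100)]
    _ ≤ (w + 3) * log (w + 1) := by gcongr

lemma sq_le_log_combination {w : ℝ} (hw : 0 ≤ w) :
    4 * w ^ 2 ≤ 1.26 * (w + 1) * w * log (w + 1) + (w - 1) * log (w + 1) ^ 2
      + 4 * w * log (w + 1) := by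
  have hLP : logPade w ≤ log (w + 1) := by
    rw [add_comm w 1]; exact logPade_le_log_one_add hw
  have hP := logPade_nonneg hw
  set L := log (w + 1)
  set P := logPade w with hPdef
  have hlin : 0 ≤ (1.26 * w ^ 2 + 5.26 * w) * (L - P) :=
    mul_nonneg (by positivity) (sub_nonneg.2 hLP)
  rcases le_or_gt 1 w with h1 | h1
  · -- the right-hand side increases with `L`, so it suffices to check it at `L = P`
    have hpoly : 4 * w ^ 2 ≤ (1.26 * w ^ 2 + 5.26 * w) * P + (w - 1) * P ^ 2 := by
      have e : (1.26 * w ^ 2 + 5.26 * w) * P + (w - 1) * P ^ 2 - 4 * w ^ 2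
          = (936 * w ^ 2 + 5076 * w ^ 3 + 7177.2 * w ^ 4 + 4113 * w ^ 5 + 1080.56 * w ^ 6
              + 156.34 * w ^ 7 + 5.58 * w ^ 8) / (60 + 90 * w + 36 * w ^ 2 + 3 * w ^ 3) ^ 2 := by
        rw [hPdef, logPade]; field_simp; ring
      have : 0 ≤ (1.26 * w ^ 2 + 5.26 * w) * P + (w - 1) * P ^ 2 - 4 * w ^ 2 := by
        rw [e]; positivity
      linarith
    nlinarith [mul_nonneg (mul_nonneg (sub_nonneg.2 h1) (sub_nonneg.2 hLP))
      (add_nonneg (hP.trans hLP) hP)]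
  · -- for `w < 1` the negative term `(w - 1) L²` is bounded using `L ≤ w`
    have hLw : L ≤ w := by
      simpa using log_le_sub_one_of_pos (show (0 : ℝ) < w + 1 by linarith)
    have hL : 0 ≤ L := log_nonneg (by linarith)
    have hpoly : (5 - w) * w ^ 2 ≤ (1.26 * w ^ 2 + 5.26 * w) * P := by
      have e : (1.26 * w ^ 2 + 5.26 * w) * P - (5 - w) * w ^ 2
          = (15.6 * w ^ 2 + 1.2 * w ^ 3 + 43.46 * w ^ 4 + 34.86 * w ^ 5 + 3 * w ^ 6)
              / (60 + 90 * w + 36 * w ^ 2 + 3 * w ^ 3) := by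
        rw [hPdef, logPade]; field_simp; ring
      have : 0 ≤ (1.26 * w ^ 2 + 5.26 * w) * P - (5 - w) * w ^ 2 := by
        rw [e]; positivity
      linarith
    nlinarith [mul_nonneg (mul_nonneg (sub_nonneg.2 h1.le) (sub_nonneg.2 hLw)) (add_nonneg hw hL)]

lemma formula_le_of_log_bounds {w q L : ℝ} (hw : 0 < w) (hq : 0 ≤ q) (hL : 0 < L)
    (h1 : 2.74 * w ≤ (w + 3) * L)
    (h2 : 4 * w ^ 2 ≤ 1.26 * (w + 1) * w * L + (w - 1) * L ^ 2 + 4 * w * L) :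
    (q * (4 * w - (w + 3) * L) - ((w - 1) / w) * L + 4 * w / L - 4) / (2 * (q * w + 1))
      * (q / (q + 1)) ≤ 0.63 := by
  rw [div_mul_div_comm, div_le_iff₀ (by positivity),
    ← mul_le_mul_iff_of_pos_right (mul_pos hw hL)]
  have expand : (q * (4 * w - (w + 3) * L) - (w - 1) / w * L + 4 * w / L - 4) * q * (w * L)
      = q ^ 2 * (4 * w - (w + 3) * L) * w * L - q * (w - 1) * L ^ 2 + 4 * q * w ^ 2
        - 4 * q * w * L := by
    field_simp
  rw [expand]
  nlinarith [mul_nonneg (mul_nonneg (sq_nonneg q) (sub_nonneg.2 h1)) hL.le,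
    mul_nonneg hq (sub_nonneg.2 h2), mul_pos hw hL]

theorem stmt_12 (A : ℝ → ℝ → ℝ)
    (hA : ∀ w q : ℝ, A w q =
      (q * (4 * w - (w + 3) * Real.log (w + 1)) - ((w - 1) / w) * Real.log (w + 1)
          + 4 * w / Real.log (w + 1) - 4) / (2 * (q * w + 1)) * (q / (q + 1))) :
    ∀ w > (0:ℝ), ∀ q ≥ (0:ℝ), A w q ≤ 0.63 := by
  intro w hw q hq
  rw [hA]
  exact formula_le_of_log_bounds hw hq (log_pos (by linarith)) (mul_le_add_three_mul_log hw.le)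
    (sq_le_log_combination hw.le)
end

section
/- Let q(x) = p(x) - 1 with p twice differentiable, and w > 0. Then the determinant of the Hessian of K(s,x) = s(1+s⁻²)^{p(x)/2} with respect to (s,x) equals ((1+w)^{q-1}/4)·[ w(wq+1)(q+1)ln(1+w)(q'² ln(1+w) + 2q'') - q'²((1-qw)ln(1+w) - 2w)² ], where w = 1/s² and q, q', q'' are evaluated at x. -/
/-! Put `a = 1 + s⁻²` and `c = p / 2`. All second partials of `K = s a^c` are explicit, and
after splitting `a^(p-2) = a^(c-1) a^(c-1)`, `a^c = a^(c-1) a` and `a^(c-1) = a^(c-2) a`,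
the claimed formula for the Hessian determinant becomes a polynomial identity in `s⁻¹`,
`a^(c-2)`, `log a`, `p'` and `p''`. -/

open Real

section ScaleFactor

variable {t : ℝ}

lemma hasDerivAt_inv_sq (ht : t ≠ 0) :
    HasDerivAt (fun u : ℝ => u⁻¹ ^ 2) (-2 * t⁻¹ ^ 3) t := by
  refine ((hasDerivAt_inv ht).pow 2).congr_deriv ?_
  simp only [Nat.cast_ofNat, ← inv_pow]
  ring

lemma hasDerivAt_one_add_inv_sq_rpow (c : ℝ) (ht : t ≠ 0) :
    HasDerivAt (fun u : ℝ => (1 + u⁻¹ ^ 2) ^ c)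
      (-2 * c * t⁻¹ ^ 3 * (1 + t⁻¹ ^ 2) ^ (c - 1)) t := by
  convert ((hasDerivAt_inv_sq ht).const_add 1).rpow_const (p := c) (Or.inl (by positivity)) using 1
  ring

lemma hasDerivAt_mul_one_add_inv_sq_rpow (c : ℝ) (ht : t ≠ 0) :
    HasDerivAt (fun u : ℝ => u * (1 + u⁻¹ ^ 2) ^ c)
      ((1 + t⁻¹ ^ 2) ^ c - 2 * c * t⁻¹ ^ 2 * (1 + t⁻¹ ^ 2) ^ (c - 1)) t := by
  refine ((hasDerivAt_id' t).mul (hasDerivAt_one_add_inv_sq_rpow c ht)).congr_deriv ?_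
  field_simp
  ring

lemma deriv_mul_one_add_inv_sq_rpow (c : ℝ) (ht : t ≠ 0) :
    deriv (fun u : ℝ => u * (1 + u⁻¹ ^ 2) ^ c) t =
      (1 + t⁻¹ ^ 2) ^ c - 2 * c * t⁻¹ ^ 2 * (1 + t⁻¹ ^ 2) ^ (c - 1) :=
  (hasDerivAt_mul_one_add_inv_sq_rpow c ht).deriv

lemma deriv_deriv_mul_one_add_inv_sq_rpow (c : ℝ) (ht : t ≠ 0) :
    deriv (deriv fun u : ℝ => u * (1 + u⁻¹ ^ 2) ^ c) t =
      2 * c * t⁻¹ ^ 3 * (1 + t⁻¹ ^ 2) ^ (c - 1) +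
        4 * c * (c - 1) * t⁻¹ ^ 5 * (1 + t⁻¹ ^ 2) ^ (c - 2) := by
  have h_near : (deriv fun u : ℝ => u * (1 + u⁻¹ ^ 2) ^ c) =ᶠ[nhds t]
      fun u => (1 + u⁻¹ ^ 2) ^ c - 2 * c * u⁻¹ ^ 2 * (1 + u⁻¹ ^ 2) ^ (c - 1) := by
    filter_upwards [isOpen_ne.mem_nhds ht] with u hu
    exact deriv_mul_one_add_inv_sq_rpow c hu
  rw [h_near.deriv_eq]
  refine ((hasDerivAt_one_add_inv_sq_rpow c ht).sub
    (((hasDerivAt_inv_sq ht).const_mul (2 * c)).mul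
      (hasDerivAt_one_add_inv_sq_rpow (c - 1) ht))).deriv.trans ?_
  rw [show c - 1 - 1 = c - 2 by ring]
  field_simp
  ring

end ScaleFactor

section Exponent

variable {a : ℝ} {g : ℝ → ℝ} {x : ℝ}

lemma deriv_deriv_const_mul_rpow (ha : 0 < a) (t : ℝ) (hg : Differentiable ℝ g)
    (hg' : DifferentiableAt ℝ (deriv g) x) :
    deriv (fun y => deriv (fun z => t * a ^ g z) y) x =
      t * a ^ g x * log a * (log a * deriv g x ^ 2 + deriv (deriv g) x) := by
  have h_inner : (deriv fun z => t * a ^ g z) = fun y => t * (log a * deriv g y * a ^ g y) :=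
    funext fun y => (((hg y).hasDerivAt.const_rpow ha).const_mul t).deriv
  rw [h_inner]
  refine ((((hg'.hasDerivAt.const_mul (log a)).mul
    ((hg x).hasDerivAt.const_rpow ha)).const_mul t)).deriv.trans ?_
  ring

lemma deriv_deriv_mul_one_add_inv_sq_rpow_mixed {t : ℝ} (ht : t ≠ 0)
    (hg : DifferentiableAt ℝ g x) :
    deriv (fun y => deriv (fun u : ℝ => u * (1 + u⁻¹ ^ 2) ^ g y) t) x =
      deriv g x * ((1 + t⁻¹ ^ 2) ^ g x * log (1 + t⁻¹ ^ 2) -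
        2 * t⁻¹ ^ 2 * (1 + t⁻¹ ^ 2) ^ (g x - 1) * (1 + g x * log (1 + t⁻¹ ^ 2))) := by
  have ha : 0 < 1 + t⁻¹ ^ 2 := by positivity
  simp only [deriv_mul_one_add_inv_sq_rpow _ ht]
  have hg₁ := hg.hasDerivAt
  refine ((hg₁.const_rpow ha).sub (((hg₁.const_mul 2).mul_const (t⁻¹ ^ 2)).mul
    ((hg₁.sub_const 1).const_rpow ha))).deriv.trans ?_
  ring

end Exponent

theorem stmt_15_general (p : ℝ → ℝ) (hp : ContDiff ℝ 2 p)
    (K : ℝ → ℝ → ℝ) (hK : ∀ s x, K s x = s * (1 + s⁻¹ ^ 2) ^ (p x / 2))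
    (s x : ℝ) (hs : 0 < s) :
    deriv (fun s' => deriv (fun s'' => K s'' x) s') s *
        deriv (fun x' => deriv (fun x'' => K s x'') x') x -
      (deriv (fun x' => deriv (fun s' => K s' x') s) x) ^ 2 =
    ((1 + s⁻¹ ^ 2) ^ (p x - 1 - 1) / 4) *
      (s⁻¹ ^ 2 * (s⁻¹ ^ 2 * (p x - 1) + 1) * (p x - 1 + 1) * Real.log (1 + s⁻¹ ^ 2) *
          ((deriv p x) ^ 2 * Real.log (1 + s⁻¹ ^ 2) + 2 * deriv (deriv p) x) -
        (deriv p x) ^ 2 *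
          ((1 - (p x - 1) * s⁻¹ ^ 2) * Real.log (1 + s⁻¹ ^ 2) - 2 * s⁻¹ ^ 2) ^ 2) := by
  obtain rfl : K = fun s x => s * (1 + s⁻¹ ^ 2) ^ (p x / 2) := funext₂ hK
  have ha : 0 < 1 + s⁻¹ ^ 2 := by positivity
  have hp₁ : Differentiable ℝ p := hp.differentiable two_ne_zero
  have hp₂ : Differentiable ℝ (deriv p) :=
    (hp.deriv' (n := 1)).differentiable one_ne_zero
  have hg : Differentiable ℝ fun y => p y / 2 := hp₁.div_const 2
  have hg' : deriv (fun y => p y / 2) = fun y => deriv p y / 2 := funext fun y => deriv_div_const ..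
  rw [deriv_deriv_mul_one_add_inv_sq_rpow _ hs.ne',
    deriv_deriv_const_mul_rpow ha s hg (by rw [hg']; exact (hp₂ x).div_const 2),
    deriv_deriv_mul_one_add_inv_sq_rpow_mixed (g := fun y => p y / 2) hs.ne' (hg x), hg',
    deriv_div_const]
  have h_sq : (1 + s⁻¹ ^ 2) ^ (p x - 1 - 1) =
      (1 + s⁻¹ ^ 2) ^ (p x / 2 - 1) * (1 + s⁻¹ ^ 2) ^ (p x / 2 - 1) := by
    rw [← Real.rpow_add ha]; ring_nf
  have h_succ (c : ℝ) : (1 + s⁻¹ ^ 2) ^ c = (1 + s⁻¹ ^ 2) ^ (c - 1) * (1 + s⁻¹ ^ 2) := by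
    rw [← Real.rpow_add_one ha.ne', sub_add_cancel]
  rw [h_sq, h_succ (p x / 2), h_succ (p x / 2 - 1), sub_sub, one_add_one_eq_two]
  field_simp
  ring

theorem stmt_15 (p : ℝ → ℝ) (hp : ContDiff ℝ 2 p) (hp1 : ∀ x, 1 ≤ p x)
    (K : ℝ → ℝ → ℝ) (hK : ∀ s x, K s x = s * (1 + s⁻¹ ^ 2) ^ (p x / 2))
    (s x : ℝ) (hs : 0 < s) :
    deriv (fun s' => deriv (fun s'' => K s'' x) s') s *
        deriv (fun x' => deriv (fun x'' => K s x'') x') x -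
      (deriv (fun x' => deriv (fun s' => K s' x') s) x) ^ 2 =
    ((1 + s⁻¹ ^ 2) ^ (p x - 1 - 1) / 4) *
      (s⁻¹ ^ 2 * (s⁻¹ ^ 2 * (p x - 1) + 1) * (p x - 1 + 1) * Real.log (1 + s⁻¹ ^ 2) *
          ((deriv p x) ^ 2 * Real.log (1 + s⁻¹ ^ 2) + 2 * deriv (deriv p) x) -
        (deriv p x) ^ 2 *
          ((1 - (p x - 1) * s⁻¹ ^ 2) * Real.log (1 + s⁻¹ ^ 2) - 2 * s⁻¹ ^ 2) ^ 2) :=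
  stmt_15_general p hp K hK s x hs
end
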